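/- Let V be a Zariski closed subset of (ℂˣ)ⁿ and let X be an irreducible component of V ∩ T for some special subvariety T of (ℂˣ)ⁿ with dim X > dim V + dim T − n. Then X is an irreducible component of V ∩ ⟨X⟩ and dim X > dim V + dim ⟨X⟩ − n, where ⟨X⟩ is the special closure of X. -/

import Mathlib

open scoped Pointwise

noncomputable section

/-- The algebraic torus `(ℂˣ)ⁿ`. -/
abbrev Torus (n : ℕ) : Type := Fin n → ℂˣ

namespace ZP

/-- The natural embedding of the torus into affine `n`-space. -/
def tEmbed {n : ℕ} : Torus n → (Fin n → ℂ) := fun x i => (x i : ℂ)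

/-- The zero locus in affine space of an ideal of polynomials. -/
def affZeroLocus {k : ℕ} (I : Ideal (MvPolynomial (Fin k) ℂ)) : Set (Fin k → ℂ) :=
  {x | ∀ p ∈ I, MvPolynomial.eval x p = 0}

/-- Zariski closed subsets of affine space `ℂᵏ`. -/
def IsAClosed {k : ℕ} (V : Set (Fin k → ℂ)) : Prop :=
  ∃ I : Ideal (MvPolynomial (Fin k) ℂ), V = affZeroLocus I

/-- Zariski closed subsets of the torus `(ℂˣ)ⁿ`: traces on the torus of
Zariski closed subsets of affine space. -/
def IsTClosed {n : ℕ} (V : Set (Torus n)) : Prop :=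
  ∃ I : Ideal (MvPolynomial (Fin n) ℂ), V = tEmbed ⁻¹' affZeroLocus I

/-- Irreducibility with respect to the Zariski topology on the torus. -/
def TIrred {n : ℕ} (X : Set (Torus n)) : Prop :=
  X.Nonempty ∧ ∀ C₁ C₂ : Set (Torus n), IsTClosed C₁ → IsTClosed C₂ →
    X ⊆ C₁ ∪ C₂ → X ⊆ C₁ ∨ X ⊆ C₂

/-- Zariski closure in the torus. -/
def tclosure {n : ℕ} (S : Set (Torus n)) : Set (Torus n) := ⋂₀ {C | IsTClosed C ∧ S ⊆ C}

/-- Krull dimension (w.r.t. the Zariski topology) of a subset of the torus: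
the Krull dimension of the poset of irreducible Zariski closed subsets of its
Zariski closure. -/
def tdim {n : ℕ} (S : Set (Torus n)) : WithBot ℕ∞ :=
  Order.krullDim {C : Set (Torus n) // IsTClosed C ∧ TIrred C ∧ C ⊆ tclosure S}

/-- `X` is an irreducible component of `A` (in the Zariski topology):
a maximal irreducible Zariski closed subset of `A`. -/
def IsCompOf {n : ℕ} (X A : Set (Torus n)) : Prop :=
  IsTClosed X ∧ TIrred X ∧ X ⊆ A ∧
    ∀ Y : Set (Torus n), IsTClosed Y → TIrred Y → X ⊆ Y → Y ⊆ A → Y = X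

/-- An algebraic subgroup of the torus is a Zariski closed subgroup. -/
def IsAlgSubgroup {n : ℕ} (H : Subgroup (Torus n)) : Prop := IsTClosed (H : Set (Torus n))

/-- Weakly special subvarieties of the torus: cosets of irreducible algebraic subgroups. -/
def WeaklySpecial {n : ℕ} (T : Set (Torus n)) : Prop :=
  ∃ (g : Torus n) (H : Subgroup (Torus n)), IsAlgSubgroup H ∧ TIrred (H : Set (Torus n)) ∧
    T = g • (H : Set (Torus n))

/-- Special subvarieties of the torus: torsion cosets of irreducible algebraic subgroups. -/
def Special {n : ℕ} (T : Set (Torus n)) : Prop :=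
  ∃ (g : Torus n) (H : Subgroup (Torus n)), IsOfFinOrder g ∧ IsAlgSubgroup H ∧
    TIrred (H : Set (Torus n)) ∧ T = g • (H : Set (Torus n))

/-- `Γ`-special subvarieties: weakly special subvarieties containing a point of `Γ`. -/
def GammaSpecial {n : ℕ} (Γ : Set (Torus n)) (T : Set (Torus n)) : Prop :=
  WeaklySpecial T ∧ (T ∩ Γ).Nonempty

/-- The weakly special closure of a set: the smallest weakly special subvariety
containing it (realised as the intersection of all of them). -/
def wsClosure {n : ℕ} (X : Set (Torus n)) : Set (Torus n) :=
  ⋂₀ {W | WeaklySpecial W ∧ X ⊆ W}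

/-- The special closure of a set. -/
def spClosure {n : ℕ} (X : Set (Torus n)) : Set (Torus n) :=
  ⋂₀ {W | Special W ∧ X ⊆ W}

/-- A subgroup `Γ` has finite rank if `dim_ℚ (Γ ⊗_ℤ ℚ)` is finite. -/
def FiniteRank {n : ℕ} (Γ : Subgroup (Torus n)) : Prop :=
  Module.Finite ℚ (TensorProduct ℤ ℚ (Additive Γ))

/-- `X` is a `Γ`-atypical subvariety of `V` (in the ambient torus `(ℂˣ)ⁿ`):
an atypical component of the intersection of `V` with some weakly special
subvariety, whose weakly special closure is `Γ`-special. -/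
def GammaAtypical {n : ℕ} (Γ V X : Set (Torus n)) : Prop :=
  (∃ T : Set (Torus n), WeaklySpecial T ∧ IsCompOf X (V ∩ T) ∧
    tdim X + (n : WithBot ℕ∞) > tdim V + tdim T) ∧
  GammaSpecial Γ (wsClosure X)

/-- `X` is a `Γ`-atypical subvariety of `V` in `S`. -/
def GammaAtypicalIn {n : ℕ} (Γ S V X : Set (Torus n)) : Prop :=
  (∃ T : Set (Torus n), WeaklySpecial T ∧ T ⊆ S ∧ IsCompOf X (V ∩ T) ∧
    tdim X + tdim S > tdim V + tdim T) ∧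
  GammaSpecial Γ (wsClosure X)


lemma tclosure_mono {n : ℕ} {S S' : Set (Torus n)} (h : S ⊆ S') :
    tclosure S ⊆ tclosure S' :=
  Set.sInter_subset_sInter fun _ hC => ⟨hC.1, h.trans hC.2⟩

lemma tdim_mono {n : ℕ} {S S' : Set (Torus n)} (h : S ⊆ S') : tdim S ≤ tdim S' :=
  Order.krullDim_le_of_strictMono
    (fun C => ⟨C.1, C.2.1, C.2.2.1, C.2.2.2.trans (tclosure_mono h)⟩) fun _ _ hab => hab

lemma subset_spClosure {n : ℕ} (X : Set (Torus n)) : X ⊆ spClosure X :=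
  fun _ hx => Set.mem_sInter.2 fun _ hW => hW.2 hx

lemma Special.spClosure_subset {n : ℕ} {T X : Set (Torus n)} (hT : Special T) (hXT : X ⊆ T) :
    spClosure X ⊆ T :=
  Set.sInter_subset_of_mem ⟨hT, hXT⟩

lemma IsCompOf.of_subset {n : ℕ} {X A B : Set (Torus n)} (hX : IsCompOf X A) (hXB : X ⊆ B)
    (hBA : B ⊆ A) : IsCompOf X B :=
  ⟨hX.1, hX.2.1, hXB, fun Y hY hYirr hXY hYB => hX.2.2.2 Y hY hYirr hXY (hYB.trans hBA)⟩

theorem sp_closure_atypical_general {n : ℕ} (V T X : Set (Torus n))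
    (hT : Special T) (hX : IsCompOf X (V ∩ T))
    (hatyp : tdim X + (n : WithBot ℕ∞) > tdim V + tdim T) :
    IsCompOf X (V ∩ spClosure X) ∧
      tdim X + (n : WithBot ℕ∞) > tdim V + tdim (spClosure X) := by
  have hXV : X ⊆ V := hX.2.2.1.trans Set.inter_subset_left
  have hspT : spClosure X ⊆ T := hT.spClosure_subset (hX.2.2.1.trans Set.inter_subset_right)
  refine ⟨hX.of_subset (Set.subset_inter hXV (subset_spClosure X))
    (Set.inter_subset_inter_right V hspT), ?_⟩
  calc tdim V + tdim (spClosure X) ≤ tdim V + tdim T := add_le_add_right (tdim_mono hspT) _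
    _ < tdim X + n := hatyp

/-- **Special-closure analogue of Lemma 2.1** (torus case). If `X` is an atypical
component of `V ∩ T` for some special `T`, then `X` is an (atypical) component of
`V ∩ ⟨X⟩`, where `⟨X⟩` is the special closure of `X`. -/
theorem sp_closure_atypical {n : ℕ} (V T X : Set (Torus n)) (hV : IsTClosed V)
    (hT : Special T) (hX : IsCompOf X (V ∩ T))
    (hatyp : tdim X + (n : WithBot ℕ∞) > tdim V + tdim T) :
    IsCompOf X (V ∩ spClosure X) ∧
      tdim X + (n : WithBot ℕ∞) > tdim V + tdim (spClosure X) :=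
  sp_closure_atypical_general V T X hT hX hatyp

end ZP
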